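/- Let (T,t,σ) be a gene tree over the species set B and let S be a species tree on B that displays every triple in 𝔖(T,t,σ). Define μ : V → W ∪ H by: (M1) μ(x) = σ(x) if t(x) = ⊙; (M2) μ(x) = lca_S(σ(L(x))) if t(x) = •; (M3) μ(x) = [u, lca_S(σ(L(x)))] if t(x) = □, where u is the unique vertex of S covering lca_S(σ(L(x))) (such u exists because lca_S(σ(L(x))) is strictly below the root ρ_S). Then μ is a reconciliation map from (T,t,σ) to S. -/

import Mathlib

/-- Event labels for the vertices of a gene tree: speciation `•`,
duplication `□`, and extant gene (leaf) `⊙`. -/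
inductive Event : Type
  | spec : Event
  | dup : Event
  | leaf : Event
deriving DecidableEq

/-- A rooted tree structure on a partially ordered set: there is a greatest
element (the root) and the set of ancestors of every element is a chain.
(Finiteness is imposed via a `Fintype` instance.) -/
def IsRootedTree (V : Type*) [PartialOrder V] : Prop :=
  (∃ ρ : V, IsTop ρ) ∧ ∀ x : V, IsChain (· ≤ ·) {y : V | x ≤ y}

/-- `L(x)`: the set of leaves (minimal elements) lying below `x`. -/
def leavesBelow {V : Type*} [PartialOrder V] (x : V) : Set V :=
  {y : V | IsMin y ∧ y ≤ x}

/-- A phylogenetic tree: a rooted tree in which every non-leaf vertex covers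
at least two vertices. -/
def IsPhyloTree (V : Type*) [PartialOrder V] : Prop :=
  IsRootedTree V ∧ ∀ x : V, ¬ IsMin x → ∃ c c' : V, c ≠ c' ∧ c ⋖ x ∧ c' ⋖ x

/-- A species tree: a rooted tree whose root covers exactly one vertex and in
which every non-leaf vertex other than the root covers at least two vertices. -/
def IsSpeciesTree (W : Type*) [PartialOrder W] : Prop :=
  IsRootedTree W ∧
  (∀ ρ : W, IsTop ρ → ∃! v : W, v ⋖ ρ) ∧
  (∀ x : W, ¬ IsMin x → ¬ IsTop x → ∃ c c' : W, c ≠ c' ∧ c ⋖ x ∧ c' ⋖ x)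

/-- A rooted tree (on its vertex type) displays the triple `((a,b),c)`, i.e.
`lca(a,b) ≺ lca({a,b,c})`. -/
def Displays {W : Type*} [PartialOrder W] (a b c : W) : Prop :=
  ∃ w₁ w₂ : W, IsLUB ({a, b} : Set W) w₁ ∧ IsLUB ({a, b, c} : Set W) w₂ ∧ w₁ < w₂

/-- Condition (C): the sets of species below distinct children of a
speciation vertex are disjoint. -/
def CondC {V B : Type*} [PartialOrder V] (t : V → Event) (σ : V → B) : Prop :=
  ∀ z c c' : V, t z = Event.spec → c ⋖ z → c' ⋖ z → c ≠ c' →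
    σ '' leavesBelow c ∩ σ '' leavesBelow c' = ∅

/-- `(T,t,σ)` is a gene tree over the (abstract) species set `B`:
`T` is a phylogenetic tree with at least three leaves, `t` labels exactly the
leaves with `⊙`, `σ` maps the leaves onto `B`, and condition (C) holds. -/
def IsGeneTree {V B : Type*} [PartialOrder V] (t : V → Event) (σ : V → B) : Prop :=
  IsPhyloTree V ∧ 3 ≤ {x : V | IsMin x}.ncard ∧
  (∀ x : V, t x = Event.leaf ↔ IsMin x) ∧
  (∀ b : B, ∃ x : V, IsMin x ∧ σ x = b) ∧
  CondC t σ

/-- `(T,t,σ)` is a gene tree whose species set `B` is the leaf set of the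
species tree with vertex set `W`: `σ` maps the leaves of `T` onto the leaves
of `W`. -/
def IsGeneTreeOver {V W : Type*} [PartialOrder V] [PartialOrder W]
    (t : V → Event) (σ : V → W) : Prop :=
  IsPhyloTree V ∧ 3 ≤ {x : V | IsMin x}.ncard ∧
  (∀ x : V, t x = Event.leaf ↔ IsMin x) ∧
  (∀ x : V, IsMin x → IsMin (σ x)) ∧
  (∀ b : W, IsMin b → ∃ x : V, IsMin x ∧ σ x = b) ∧
  CondC t σ

/-- The edges `[u,v]` of a species tree: pairs whose first component `u`
covers the second component `v` (so `.1` is the upper and `.2` the lower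
endpoint of the edge). -/
abbrev SEdge (W : Type*) [PartialOrder W] : Type _ := {p : W × W // p.2 ⋖ p.1}

/-- The (non-strict) extension `≼` of the species-tree order to `W ∪ H`. -/
def extLE {W : Type*} [PartialOrder W] : W ⊕ SEdge W → W ⊕ SEdge W → Prop
  | Sum.inl x, Sum.inl y => x ≤ y
  | Sum.inl x, Sum.inr e => x ≤ e.1.2
  | Sum.inr e, Sum.inl y => e.1.1 ≤ y
  | Sum.inr e, Sum.inr f => e.1.2 ≤ f.1.2

/-- The strict extension `≺` of the species-tree order to `W ∪ H`. -/
def extLT {W : Type*} [PartialOrder W] : W ⊕ SEdge W → W ⊕ SEdge W → Prop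
  | Sum.inl x, Sum.inl y => x < y
  | Sum.inl x, Sum.inr e => x ≤ e.1.2
  | Sum.inr e, Sum.inl y => e.1.1 ≤ y
  | Sum.inr e, Sum.inr f => e.1.2 < f.1.2

/-- `μ` is a reconciliation map from the gene tree `(T,t,σ)` to the species
tree on `W` (with edge set `SEdge W`); the leaves of `W` play the role of the
species set `B`. -/
def IsReconMap {V W : Type*} [PartialOrder V] [PartialOrder W]
    (t : V → Event) (σ : V → W) (μ : V → W ⊕ SEdge W) : Prop :=
  (∀ x : V, t x = Event.leaf → μ x = Sum.inl (σ x)) ∧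
  (∀ x : V, t x = Event.spec → ∃ w : W, ¬ IsMin w ∧ μ x = Sum.inl w) ∧
  (∀ x : V, t x = Event.dup → ∃ e : SEdge W, μ x = Sum.inr e) ∧
  (∀ x y : V, x < y → t x = Event.dup → t y = Event.dup → extLE (μ x) (μ y)) ∧
  (∀ x y : V, x < y → ¬ (t x = Event.dup ∧ t y = Event.dup) →
    extLT (μ x) (μ y)) ∧
  (∀ x : V, t x = Event.spec →
    ∃ w : W, IsLUB (σ '' leavesBelow x) w ∧ μ x = Sum.inl w)

/-- Membership of the triple `((x,y),z)` in `𝔊(T,t,σ)`: a triple of leaves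
displayed by `T`, rooted in a speciation vertex, whose species are pairwise
distinct. -/
def TripleInG {V B : Type*} [PartialOrder V] (t : V → Event) (σ : V → B)
    (x y z : V) : Prop :=
  IsMin x ∧ IsMin y ∧ IsMin z ∧
  (∃ w₁ w₂ : V, IsLUB ({x, y} : Set V) w₁ ∧ IsLUB ({x, y, z} : Set V) w₂ ∧
    w₁ < w₂ ∧ t w₂ = Event.spec) ∧
  σ x ≠ σ y ∧ σ y ≠ σ z ∧ σ x ≠ σ z


section Helpers
variable {X : Type*} [PartialOrder X] [Fintype X]

/-- In a finite poset with a top and chain-ancestors, every nonempty set has a LUB. -/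
lemma tree_lub_exists (hroot : ∃ ρ : X, IsTop ρ)
    (hchain : ∀ x : X, IsChain (· ≤ ·) {y : X | x ≤ y})
    {A : Set X} (hA : A.Nonempty) : ∃ w : X, IsLUB A w := by
  obtain ⟨ρ, hρ⟩ := hroot
  obtain ⟨a, ha⟩ := hA
  have hUchain : IsChain (· ≤ ·) (upperBounds A) := by
    refine (hchain a).mono ?_
    intro u hu; exact hu ha
  have hmem : ρ ∈ upperBounds A := fun x _ => hρ x
  obtain ⟨w, _, hw⟩ := exists_minimal_le_of_wellFoundedLT (· ∈ upperBounds A) _ hmem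
  refine ⟨w, hw.1, fun u hu => ?_⟩
  rcases hUchain.total hw.1 hu with h | h
  · exact h
  · exact hw.2 hu h
lemma tree_exists_min_le (x : X) : ∃ a : X, IsMin a ∧ a ≤ x := by
  obtain ⟨b, hb, hbmin⟩ := exists_minimal_le_of_wellFoundedLT (· ∈ {y : X | y ≤ x}) _
    (show x ∈ {y : X | y ≤ x} from le_refl x)
  exact ⟨b, fun c hc => hbmin.2 (hc.trans hbmin.1) hc, hbmin.1⟩

lemma tree_exists_le_covby {x y : X} (h : x < y) : ∃ c : X, x ≤ c ∧ c ⋖ y := by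
  obtain ⟨c, hc, hcmax⟩ := (Set.toFinite {z : X | x ≤ z ∧ z < y}).exists_le_maximal
    (show x ∈ {z : X | x ≤ z ∧ z < y} from ⟨le_refl x, h⟩)
  refine ⟨c, hcmax.1.1, hcmax.1.2, fun u hcu huy => ?_⟩
  exact absurd (hcmax.2 ⟨hcmax.1.1.trans hcu.le, huy⟩ hcu.le) (not_le_of_gt hcu)

lemma tree_exists_covby {x y : X} (h : x < y) : ∃ u : X, x ⋖ u := by
  obtain ⟨u, hu, humin⟩ := exists_minimal_le_of_wellFoundedLT (· ∈ {z : X | x < z}) _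
    (show y ∈ {z : X | x < z} from h)
  exact ⟨u, humin.1, fun z hxz hzu => absurd (humin.2 hxz hzu.le) (not_le_of_gt hzu)⟩

/-- Pair lemma: the lub of a set is the lub of a pair from the set. -/
lemma tree_lub_pair (hroot : ∃ ρ : X, IsTop ρ)
    (hchain : ∀ x : X, IsChain (· ≤ ·) {y : X | x ≤ y})
    {A : Set X} {w : X} {a : X} (ha : a ∈ A) (hw : IsLUB A w) :
    ∃ b ∈ A, ∃ c ∈ A, IsLUB ({b, c} : Set X) w := by
  set S : Set X := {p : X | ∃ b ∈ A, IsLUB ({a, b} : Set X) p} with hSdef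
  have hane : ({a, a} : Set X).Nonempty := ⟨a, by simp⟩
  obtain ⟨p₀, hp₀⟩ := tree_lub_exists hroot hchain hane
  have hp₀S : p₀ ∈ S := ⟨a, ha, hp₀⟩
  have hSchain : IsChain (· ≤ ·) S := by
    refine (hchain a).mono ?_
    rintro p ⟨b, _, hp⟩; exact hp.1 (by simp)
  obtain ⟨p, hp, hpmax⟩ := (Set.toFinite S).exists_le_maximal hp₀S
  obtain ⟨b, hb, hpl⟩ := hpmax.1
  have hpub : p ∈ upperBounds A := by
    intro c hc
    obtain ⟨q, hq⟩ := tree_lub_exists hroot hchain (show ({a, c} : Set X).Nonempty from ⟨a, by simp⟩)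
    have hqS : q ∈ S := ⟨c, hc, hq⟩
    have hqp : q ≤ p := by
      rcases hSchain.total hqS hpmax.1 with h | h
      · exact h
      · exact hpmax.2 hqS h
    exact le_trans (hq.1 (by simp)) hqp
  have hpw : p ≤ w := hpl.2 (fun u hu => hw.1 (by
      rcases hu with h | h
      · exact h ▸ ha
      · exact (Set.mem_singleton_iff.1 h) ▸ hb))
  have hwp : w ≤ p := hw.2 hpub
  have : p = w := le_antisymm hpw hwp
  exact ⟨a, ha, b, hb, this ▸ hpl⟩
end Helpers

/-- construction in the proof of Theorem 1.  Suppose the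
species tree `S` on `B` displays every triple in `𝔖(T,t,σ)` and suppose
`μ : V → W ∪ H` satisfies: (M1) `μ x = σ x` for leaves; (M2)
`μ x = lca_S(σ(L(x)))` for speciation vertices; (M3)
`μ x = [u, lca_S(σ(L(x)))]` for duplication vertices, where `u` is the vertex
of `S` covering `lca_S(σ(L(x)))`.  Then `μ` is a reconciliation map from
`(T,t,σ)` to `S`. -/
theorem explicit_map_is_reconciliation
    {V W : Type*} [PartialOrder V] [Fintype V] [PartialOrder W] [Fintype W]
    (t : V → Event) (σ : V → W) (μ : V → W ⊕ SEdge W)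
    (hT : IsGeneTreeOver t σ) (hS : IsSpeciesTree W)
    (hdisp : ∀ x y z : V, TripleInG t σ x y z → Displays (σ x) (σ y) (σ z))
    (hM1 : ∀ x : V, t x = Event.leaf → μ x = Sum.inl (σ x))
    (hM2 : ∀ x : V, t x = Event.spec → ∀ w : W,
      IsLUB (σ '' leavesBelow x) w → μ x = Sum.inl w)
    (hM3 : ∀ x : V, t x = Event.dup → ∀ w : W,
      IsLUB (σ '' leavesBelow x) w → ∀ u : W, ∀ h : w ⋖ u,
        μ x = Sum.inr ⟨(u, w), h⟩) :
    IsReconMap t σ μ := by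
  obtain ⟨⟨⟨hVroot, hVchain⟩, hVchild⟩, -, tleaf, σmin, σsurj, hC⟩ := hT
  obtain ⟨⟨hWroot, hWchain⟩, hSroot, hSchild⟩ := hS
  -- basic facts
  have hLmem : ∀ x : V, ∀ b : W, b ∈ σ '' leavesBelow x → IsMin b := by
    rintro x b ⟨a, ⟨ha, -⟩, rfl⟩; exact σmin a ha
  have hLne : ∀ x : V, (σ '' leavesBelow x).Nonempty := by
    intro x
    obtain ⟨a, ham, hax⟩ := tree_exists_min_le x
    exact ⟨σ a, a, ⟨ham, hax⟩, rfl⟩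
  have hlub : ∀ x : V, ∃ w : W, IsLUB (σ '' leavesBelow x) w := fun x =>
    tree_lub_exists hWroot hWchain (hLne x)
  have hmono : ∀ {x y : V}, x ≤ y → ∀ {wx wy : W}, IsLUB (σ '' leavesBelow x) wx →
      IsLUB (σ '' leavesBelow y) wy → wx ≤ wy := by
    intro x y hxy wx wy hwx hwy
    exact hwx.mono hwy (Set.image_mono (fun a ha => ⟨ha.1, ha.2.trans hxy⟩))
  -- the root of W and its unique child
  obtain ⟨ρW, hρW⟩ := hWroot
  obtain ⟨v, hv, hvuniq⟩ := hSroot ρW hρW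
  have hmin_le_v : ∀ b : W, IsMin b → b ≤ v := by
    intro b hb
    have hble : b ≤ ρW := hρW b
    have hbne : b ≠ ρW := by
      rintro rfl
      exact absurd (le_antisymm (hb hv.le) hv.le) (ne_of_lt hv.lt).symm
    obtain ⟨c, hbc, hcρ⟩ := tree_exists_le_covby (lt_of_le_of_ne hble hbne)
    exact hbc.trans (le_of_eq (hvuniq c hcρ))
  have hcov_above : ∀ (x : V) (wx : W), IsLUB (σ '' leavesBelow x) wx → ∃ u : W, wx ⋖ u := by
    intro x wx hwx
    have hwv : wx ≤ v := hwx.2 (fun b hb => hmin_le_v b (hLmem x b hb))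
    exact tree_exists_covby (lt_of_le_of_lt hwv hv.lt)
  -- two children of a non-minimal vertex with another child distinct from a given one
  have hother : ∀ y c : V, ¬ IsMin y → c ⋖ y → ∃ c' : V, c' ≠ c ∧ c' ⋖ y := by
    intro y c hy hc
    obtain ⟨c₁, c₂, hne, h₁, h₂⟩ := hVchild y hy
    by_cases h : c₁ = c
    · exact ⟨c₂, by rw [← h]; exact hne.symm, h₂⟩
    · exact ⟨c₁, h, h₁⟩
  have hdisj : ∀ y c c' : V, t y = Event.spec → c ⋖ y → c' ⋖ y → c ≠ c' →
      ∀ b : W, b ∈ σ '' leavesBelow c → b ∈ σ '' leavesBelow c' → False := by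
    intro y c c' hy hc hc' hne b hb hb'
    have := hC y c c' hy hc hc' hne
    exact absurd (Set.mem_inter hb hb') (by rw [this]; exact Set.notMem_empty b)
  -- a speciation vertex is not minimal
  have hspec_nmin : ∀ y : V, t y = Event.spec → ¬ IsMin y := by
    intro y hy hmin
    rw [← tleaf y] at hmin
    rw [hy] at hmin; exact Event.noConfusion hmin
  -- strictness key lemma: child of a speciation vertex maps strictly below
  have keylem : ∀ y c : V, ∀ wc wy : W, t y = Event.spec → c ⋖ y →
      IsLUB (σ '' leavesBelow c) wc → IsLUB (σ '' leavesBelow y) wy → wc < wy := by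
    intro y c wc wy hy hc hwc hwy
    refine lt_of_le_of_ne (hmono hc.le hwc hwy) ?_
    intro heq
    obtain ⟨c'', hc''ne, hc''⟩ := hother y c (hspec_nmin y hy) hc
    obtain ⟨z, hz, hzc''⟩ := tree_exists_min_le c''
    have hσz : σ z ∈ σ '' leavesBelow c'' := ⟨z, ⟨hz, hzc''⟩, rfl⟩
    have hσzy : σ z ∈ σ '' leavesBelow y := ⟨z, ⟨hz, hzc''.trans hc''.le⟩, rfl⟩
    have hzle : σ z ≤ wc := heq ▸ hwy.1 hσzy
    obtain ⟨a₀, ha₀, ha₀c⟩ := tree_exists_min_le c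
    have hσa₀ : σ a₀ ∈ σ '' leavesBelow c := ⟨a₀, ⟨ha₀, ha₀c⟩, rfl⟩
    by_cases hwcmin : IsMin wc
    · -- wc is a leaf of W: contradiction with disjointness
      have h1 : σ a₀ = wc := le_antisymm (hwc.1 hσa₀) (hwcmin (hwc.1 hσa₀))
      have h2 : σ z = wc := le_antisymm hzle (hwcmin hzle)
      exact hdisj y c c'' hy hc hc'' (Ne.symm hc''ne) wc (h1 ▸ hσa₀) (h2 ▸ hσz)
    · -- wc is lub of a pair of species below c
      obtain ⟨p, hp, q, hq, hpq⟩ := tree_lub_pair ⟨ρW, hρW⟩ hWchain hσa₀ hwc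
      obtain ⟨a, ⟨ham, hac⟩, rfl⟩ := hp
      obtain ⟨b, ⟨hbm, hbc⟩, rfl⟩ := hq
      have hab : σ a ≠ σ b := by
        rintro h
        apply hwcmin
        have : wc = σ a := by
          have : IsLUB ({σ a} : Set W) wc := by
            rw [← Set.pair_eq_singleton]; rw [h] at hpq ⊢; exact hpq
          exact (isLUB_singleton.unique this).symm
        rw [this]; exact σmin a ham
      have haz : σ a ≠ σ z := by
        rintro h
        exact hdisj y c c'' hy hc hc'' (Ne.symm hc''ne) (σ a) ⟨a, ⟨ham, hac⟩, rfl⟩ (h ▸ hσz)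
      have hbz : σ b ≠ σ z := by
        rintro h
        exact hdisj y c c'' hy hc hc'' (Ne.symm hc''ne) (σ b) ⟨b, ⟨hbm, hbc⟩, rfl⟩ (h ▸ hσz)
      -- the gene triple ((a,b),z)
      obtain ⟨w₁, hw₁⟩ := tree_lub_exists hVroot hVchain (show ({a, b} : Set V).Nonempty from ⟨a, by simp⟩)
      have hw₂ : IsLUB ({a, b, z} : Set V) y := by
        constructor
        · rintro u (rfl | rfl | rfl)
          · exact hac.trans hc.le
          · exact hbc.trans hc.le
          · exact hzc''.trans hc''.le
        · intro u hu
          have hzu : z ≤ u := hu (by simp)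
          have hau : a ≤ u := hu (by simp)
          have hcomp : c'' ≤ u ∨ u ≤ c'' :=
            (hVchain z).total (Set.mem_setOf.2 hzc'') (Set.mem_setOf.2 hzu)
          rcases hcomp with h | h
          · have hcomp2 : y ≤ u ∨ u ≤ y :=
              (hVchain a).total (Set.mem_setOf.2 (hac.trans hc.le)) (Set.mem_setOf.2 hau)
            rcases hcomp2 with h2 | h2
            · exact h2
            · rcases lt_or_eq_of_le h2 with h3 | h3
              · exfalso
                have : u = c'' := le_antisymm (by
                  rcases lt_or_eq_of_le h with h4 | h4
                  · exact absurd h3 (hc''.2 h4)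
                  · exact h4.ge) h
                exact hdisj y c c'' hy hc hc'' (Ne.symm hc''ne) (σ a)
                  ⟨a, ⟨ham, hac⟩, rfl⟩ ⟨a, ⟨ham, hau.trans this.le⟩, rfl⟩
              · exact h3.ge
          · exfalso
            exact hdisj y c c'' hy hc hc'' (Ne.symm hc''ne) (σ a)
              ⟨a, ⟨ham, hac⟩, rfl⟩ ⟨a, ⟨ham, hau.trans h⟩, rfl⟩
      have hw₁y : w₁ < y := by
        have hw₁c : w₁ ≤ c := hw₁.2 (by rintro u (rfl | rfl); exacts [hac, hbc])
        exact lt_of_le_of_lt hw₁c hc.lt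
      have htrip : TripleInG t σ a b z :=
        ⟨ham, hbm, hz, ⟨w₁, y, hw₁, hw₂, hw₁y, hy⟩, hab, hbz, haz⟩
      obtain ⟨s₁, s₂, hs₁, hs₂, hs12⟩ := hdisp a b z htrip
      have hs₁wc : s₁ = wc := hs₁.unique hpq
      have hs₂wc : s₂ ≤ wc := hs₂.2 (by
        rintro u (rfl | rfl | rfl)
        · exact hpq.1 (by simp)
        · exact hpq.1 (by simp)
        · exact hzle)
      exact absurd (lt_of_lt_of_le (hs₁wc ▸ hs12) hs₂wc) (lt_irrefl wc)
  -- spec vertices map to non-minimal vertices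
  have hspec_notmin_img : ∀ x : V, t x = Event.spec → ∀ w : W,
      IsLUB (σ '' leavesBelow x) w → ¬ IsMin w := by
    intro x hx w hw hwmin
    obtain ⟨c₁, c₂, hne, h₁, h₂⟩ := hVchild x (hspec_nmin x hx)
    obtain ⟨a, ham, hac⟩ := tree_exists_min_le c₁
    obtain ⟨b, hbm, hbc⟩ := tree_exists_min_le c₂
    have ha : σ a ∈ σ '' leavesBelow x := ⟨a, ⟨ham, hac.trans h₁.le⟩, rfl⟩
    have hb : σ b ∈ σ '' leavesBelow x := ⟨b, ⟨hbm, hbc.trans h₂.le⟩, rfl⟩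
    have h1 : σ a = w := le_antisymm (hw.1 ha) (hwmin (hw.1 ha))
    have h2 : σ b = w := le_antisymm (hw.1 hb) (hwmin (hw.1 hb))
    exact hdisj x c₁ c₂ hx h₁ h₂ hne w (h1 ▸ ⟨a, ⟨ham, hac⟩, rfl⟩) (h2 ▸ ⟨b, ⟨hbm, hbc⟩, rfl⟩)
  -- y above something is not a leaf
  have hnotleaf : ∀ {x y : V}, x < y → t y ≠ Event.leaf := by
    intro x y hxy hy
    have := (tleaf y).1 hy
    exact absurd (le_antisymm (this hxy.le) hxy.le) (ne_of_lt hxy).symm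
  refine ⟨hM1, ?_, ?_, ?_, ?_, ?_⟩
  · -- (ii) speciation
    intro x hx
    obtain ⟨w, hw⟩ := hlub x
    exact ⟨w, hspec_notmin_img x hx w hw, hM2 x hx w hw⟩
  · -- (iii) duplication
    intro x hx
    obtain ⟨w, hw⟩ := hlub x
    obtain ⟨u, hu⟩ := hcov_above x w hw
    exact ⟨⟨(u, w), hu⟩, hM3 x hx w hw u hu⟩
  · -- (iv) both duplications
    intro x y hxy hx hy
    obtain ⟨wx, hwx⟩ := hlub x
    obtain ⟨ux, hux⟩ := hcov_above x wx hwx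
    obtain ⟨wy, hwy⟩ := hlub y
    obtain ⟨uy, huy⟩ := hcov_above y wy hwy
    rw [hM3 x hx wx hwx ux hux, hM3 y hy wy hwy uy huy]
    exact hmono hxy.le hwx hwy
  · -- (v) strict inequality
    intro x y hxy hnboth
    have hyleaf := hnotleaf hxy
    obtain ⟨wy, hwy⟩ := hlub y
    cases hty : t y with
    | leaf => exact absurd hty hyleaf
    | spec =>
      -- find the child of y above x
      obtain ⟨c, hxc, hcy⟩ := tree_exists_le_covby hxy
      obtain ⟨wc, hwc⟩ := hlub c
      have hkey : wc < wy := keylem y c wc wy hty hcy hwc hwy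
      rw [hM2 y hty wy hwy]
      cases htx : t x with
      | leaf =>
        rw [hM1 x htx]
        have hxm : IsMin x := (tleaf x).1 htx
        have : σ x ≤ wc := hwc.1 ⟨x, ⟨hxm, hxc⟩, rfl⟩
        exact lt_of_le_of_lt this hkey
      | spec =>
        obtain ⟨wx, hwx⟩ := hlub x
        rw [hM2 x htx wx hwx]
        exact lt_of_le_of_lt (hmono hxc hwx hwc) hkey
      | dup =>
        obtain ⟨wx, hwx⟩ := hlub x
        obtain ⟨ux, hux⟩ := hcov_above x wx hwx
        rw [hM3 x htx wx hwx ux hux]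
        show ux ≤ wy
        have hwxwy : wx < wy := lt_of_le_of_lt (hmono hxc hwx hwc) hkey
        have hcomp : ux ≤ wy ∨ wy ≤ ux :=
          (hWchain wx).total (Set.mem_setOf.2 hux.le) (Set.mem_setOf.2 hwxwy.le)
        rcases hcomp with h | h
        · exact h
        · rcases lt_or_eq_of_le h with h2 | h2
          · exact absurd h2 (hux.2 hwxwy)
          · exact h2.ge
    | dup =>
      have htx : t x ≠ Event.dup := fun h => hnboth ⟨h, hty⟩
      obtain ⟨uy, huy⟩ := hcov_above y wy hwy
      rw [hM3 y hty wy hwy uy huy]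
      cases htx' : t x with
      | leaf =>
        rw [hM1 x htx']
        show σ x ≤ wy
        exact hwy.1 ⟨x, ⟨(tleaf x).1 htx', hxy.le⟩, rfl⟩
      | spec =>
        obtain ⟨wx, hwx⟩ := hlub x
        rw [hM2 x htx' wx hwx]
        show wx ≤ wy
        exact hmono hxy.le hwx hwy
      | dup => exact absurd htx' htx
  · -- (vi) speciation lub condition
    intro x hx
    obtain ⟨w, hw⟩ := hlub x
    exact ⟨w, hw, hM2 x hx w hw⟩
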